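/- arXiv:2205.04690 — 3 statements merged into one kernel-verified Lean document; each statement's English description precedes it below -/
import Mathlib

section
/- Let ν₀₁, ν₁₀ ≥ 0 and let (μ₁₀, μ₀₁) solve the ODE system μ₁₀' = (ν₀₁ − μ₀₁)(ν₁₀ − μ₁₀), μ₀₁' = (ν₀₁ − μ₀₁ + ν₁₀ − μ₁₀)(ν₀₁ − μ₀₁), with μ₁₀(0) = μ₀₁(0) = 0, on [0,∞). Then for all t ≥ 0, 0 ≤ μ₁₀(t) ≤ ν₁₀ and 0 ≤ μ₀₁(t) ≤ ν₀₁, and both μ₁₀ and μ₀₁ are nondecreasing. -/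
/-!
The deficits `ν₁₀ - μ₁₀` and `ν₀₁ - μ₀₁` each solve a linear equation `x' = -c(t) x` with continuous
`c`, so an integrating factor shows they keep the sign of their nonnegative initial values. Then
both right-hand sides are products of nonnegative factors, which gives monotonicity, and
monotonicity from `μ(0) = 0` gives the lower bounds.
-/

open Set Real

theorem nonneg_of_hasDerivAt_mul_self {f g : ℝ → ℝ} (hg : ContinuousOn g (Ici 0))
    (hf : ∀ t ≥ (0 : ℝ), HasDerivAt f (g t * f t) t) (h0 : 0 ≤ f 0) {t : ℝ} (ht : 0 ≤ t) :
    0 ≤ f t := by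
  -- extending `g` by `g 0` to the left makes `∫₀ᵗ g` differentiable also at `t = 0`
  set G : ℝ → ℝ := fun s => g (max s 0)
  have hG : Continuous G :=
    hg.comp_continuous (continuous_id.max continuous_const) fun s => le_max_right s 0
  set F : ℝ → ℝ := fun t => ∫ s in (0 : ℝ)..t, G s
  have hF : ∀ t, HasDerivAt F (G t) t := fun t =>
    intervalIntegral.integral_hasDerivAt_right (hG.intervalIntegrable _ _)
      (hG.stronglyMeasurableAtFilter _ _) hG.continuousAt
  -- `f · exp (-∫₀ᵗ g)` is constant, so `f t = f 0 · exp (∫₀ᵗ g)`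
  have hk : ∀ x ≥ (0 : ℝ), HasDerivAt (fun s => f s * exp (-F s)) 0 x := by
    intro x hx
    refine ((hf x hx).mul (hF x).neg.exp).congr_deriv ?_
    simp only [G, max_eq_left hx]
    ring
  have hconst : f t * exp (-F t) = f 0 * exp (-F 0) :=
    constant_of_has_deriv_right_zero
      (fun x hx => (hk x hx.1).continuousAt.continuousWithinAt)
      (fun x hx => (hk x hx.1).hasDerivWithinAt) t ⟨ht, le_rfl⟩
  have hpos := exp_pos (-F t)
  simp only [F, intervalIntegral.integral_same, neg_zero, exp_zero, mul_one] at hconst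
  nlinarith

theorem monotoneOn_Ici_of_hasDerivAt_nonneg {f f' : ℝ → ℝ}
    (hf : ∀ t ≥ (0 : ℝ), HasDerivAt f (f' t) t) (hf' : ∀ t ≥ (0 : ℝ), 0 ≤ f' t) :
    MonotoneOn f (Ici 0) := by
  refine monotoneOn_of_hasDerivWithinAt_nonneg (convex_Ici 0)
    (fun t ht => (hf t ht).continuousAt.continuousWithinAt) (f' := f') ?_ ?_
  all_goals
    rw [interior_Ici]
    intro t ht
  · exact (hf t (le_of_lt ht)).hasDerivWithinAt
  · exact hf' t (le_of_lt ht)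

theorem stmt_1 (ν01 ν10 : ℝ) (hν01 : 0 ≤ ν01) (hν10 : 0 ≤ ν10)
    (μ10 μ01 : ℝ → ℝ)
    (h10 : ∀ t ≥ (0:ℝ), HasDerivAt μ10 ((ν01 - μ01 t) * (ν10 - μ10 t)) t)
    (h01 : ∀ t ≥ (0:ℝ), HasDerivAt μ01 ((ν01 - μ01 t + (ν10 - μ10 t)) * (ν01 - μ01 t)) t)
    (h0 : μ10 0 = 0) (h0' : μ01 0 = 0) :
    (∀ t ≥ (0:ℝ), 0 ≤ μ10 t ∧ μ10 t ≤ ν10 ∧ 0 ≤ μ01 t ∧ μ01 t ≤ ν01) ∧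
    MonotoneOn μ10 (Set.Ici 0) ∧ MonotoneOn μ01 (Set.Ici 0) := by
  have ha : ∀ t ≥ (0:ℝ), HasDerivAt (fun s => ν10 - μ10 s) (-(ν01 - μ01 t) * (ν10 - μ10 t)) t :=
    fun t ht => by rw [neg_mul]; exact (h10 t ht).const_sub ν10
  have hb : ∀ t ≥ (0:ℝ), HasDerivAt (fun s => ν01 - μ01 s)
      (-(ν01 - μ01 t + (ν10 - μ10 t)) * (ν01 - μ01 t)) t :=
    fun t ht => by rw [neg_mul]; exact (h01 t ht).const_sub ν01
  have hcb : ContinuousOn (fun s => ν01 - μ01 s) (Ici 0) :=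
    fun t ht => (hb t ht).continuousAt.continuousWithinAt
  have hca : ContinuousOn (fun s => ν10 - μ10 s) (Ici 0) :=
    fun t ht => (ha t ht).continuousAt.continuousWithinAt
  have hb_nonneg : ∀ t ≥ (0:ℝ), 0 ≤ ν01 - μ01 t := fun t ht =>
    nonneg_of_hasDerivAt_mul_self (hcb.add hca).neg hb (by simpa [h0'] using hν01) ht
  have ha_nonneg : ∀ t ≥ (0:ℝ), 0 ≤ ν10 - μ10 t := fun t ht =>
    nonneg_of_hasDerivAt_mul_self hcb.neg ha (by simpa [h0] using hν10) ht
  have hmono10 : MonotoneOn μ10 (Ici 0) := monotoneOn_Ici_of_hasDerivAt_nonneg h10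
    fun t ht => mul_nonneg (hb_nonneg t ht) (ha_nonneg t ht)
  have hmono01 : MonotoneOn μ01 (Ici 0) := monotoneOn_Ici_of_hasDerivAt_nonneg h01
    fun t ht => mul_nonneg (add_nonneg (hb_nonneg t ht) (ha_nonneg t ht)) (hb_nonneg t ht)
  refine ⟨fun t ht => ⟨?_, ?_, ?_, ?_⟩, hmono10, hmono01⟩
  · simpa [h0] using hmono10 self_mem_Ici ht ht
  · linarith [ha_nonneg t ht]
  · simpa [h0'] using hmono01 self_mem_Ici ht ht
  · linarith [hb_nonneg t ht]
end

section
/- Let a(t) = ν₀₁ − μ₀₁(t) and b(t) = ν₁₀ − μ₁₀(t) where (μ₁₀, μ₀₁) solves μ₁₀' = a·b, μ₀₁' = (a+b)·a with zero initial conditions, and ν₀₁, ν₁₀ > 0. Then a and b satisfy a' = −(a+b)a, b' = −ab, and a(t), b(t) > 0 for all t ≥ 0 (the free group counts never vanish in finite time). -/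
theorem stmt_7 (ν01 ν10 : ℝ) (hν01 : 0 < ν01) (hν10 : 0 < ν10)
    (μ10 μ01 : ℝ → ℝ) (h0 : μ10 0 = 0) (h0' : μ01 0 = 0)
    (a b : ℝ → ℝ) (ha : ∀ t, a t = ν01 - μ01 t) (hb : ∀ t, b t = ν10 - μ10 t)
    (h10 : ∀ t ≥ (0:ℝ), HasDerivAt μ10 (a t * b t) t)
    (h01 : ∀ t ≥ (0:ℝ), HasDerivAt μ01 ((a t + b t) * a t) t) :
    (∀ t ≥ (0:ℝ), HasDerivAt a (-((a t + b t) * a t)) t ∧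
      HasDerivAt b (-(a t * b t)) t) ∧
    (∀ t ≥ (0:ℝ), 0 < a t ∧ 0 < b t) := by
  have hfa : a = fun t => ν01 - μ01 t := funext ha
  have hfb : b = fun t => ν10 - μ10 t := funext hb
  have hA : ∀ t ≥ (0:ℝ), HasDerivAt a (-((a t + b t) * a t)) t := by
    intro t ht
    have h := (h01 t ht).const_sub ν01
    rw [← hfa] at h
    exact h
  have hB : ∀ t ≥ (0:ℝ), HasDerivAt b (-(a t * b t)) t := by
    intro t ht
    have h := (h10 t ht).const_sub ν10
    rw [← hfb] at h
    exact h
  have ha0 : a 0 = ν01 := by rw [ha 0, h0', sub_zero]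
  have hb0 : b 0 = ν10 := by rw [hb 0, h0, sub_zero]
  refine ⟨fun t ht => ⟨hA t ht, hB t ht⟩, ?_⟩
  by_contra hcon
  push_neg at hcon
  obtain ⟨t0, ht0, hbad⟩ := hcon
  set S : Set ℝ := {t | 0 ≤ t ∧ min (a t) (b t) ≤ 0} with hS
  have ht0S : t0 ∈ S := by
    refine ⟨ht0, ?_⟩
    rcases le_or_gt (a t0) 0 with h | h
    · exact le_trans (min_le_left _ _) h
    · exact le_trans (min_le_right _ _) (hbad h)
  have hne : S.Nonempty := ⟨t0, ht0S⟩
  have hbdd : BddBelow S := ⟨0, fun s hs => hs.1⟩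
  set T : ℝ := sInf S with hT
  have hT0 : 0 ≤ T := le_csInf hne (fun s hs => hs.1)
  -- positivity strictly before T
  have hpos : ∀ x, 0 ≤ x → x < T → 0 < a x ∧ 0 < b x := by
    intro x hx hxT
    by_contra hc
    have hxS : x ∈ S := by
      refine ⟨hx, ?_⟩
      push_neg at hc
      rcases le_or_gt (a x) 0 with h | h
      · exact le_trans (min_le_left _ _) h
      · exact le_trans (min_le_right _ _) (hc h)
    exact absurd (csInf_le hbdd hxS) (not_le.mpr hxT)
  -- min (a T) (b T) ≤ 0
  have hTcl : T ∈ closure S := csInf_mem_closure hne hbdd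
  have hmin_cont : ContinuousAt (fun t => min (a t) (b t)) T :=
    ((hA T hT0).continuousAt).min ((hB T hT0).continuousAt)
  have hfT : min (a T) (b T) ≤ 0 := by
    haveI hnb : (nhdsWithin T S).NeBot := mem_closure_iff_nhdsWithin_neBot.mp hTcl
    refine le_of_tendsto (hmin_cont.continuousWithinAt (s := S)) ?_
    exact eventually_nhdsWithin_of_forall (fun s hs => hs.2)
  -- continuity on Icc 0 T
  have hcontA : ContinuousOn a (Set.Icc 0 T) :=
    fun x hx => ((hA x hx.1).continuousAt).continuousWithinAt
  have hcontB : ContinuousOn b (Set.Icc 0 T) :=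
    fun x hx => ((hB x hx.1).continuousAt).continuousWithinAt
  set C : ℝ := ν01 + ν10 with hC
  -- a + b antitone on [0,T]
  have hsum_anti : AntitoneOn (fun t => a t + b t) (Set.Icc 0 T) := by
    apply antitoneOn_of_deriv_nonpos (convex_Icc 0 T) (hcontA.add hcontB)
    · intro x hx
      rw [interior_Icc] at hx
      exact ((hA x hx.1.le).add (hB x hx.1.le)).differentiableAt.differentiableWithinAt
    · intro x hx
      rw [interior_Icc] at hx
      rw [((hA x hx.1.le).add (hB x hx.1.le)).deriv]
      obtain ⟨hax, hbx⟩ := hpos x hx.1.le hx.2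
      nlinarith
  have hsum_le : ∀ x ∈ Set.Icc (0:ℝ) T, a x + b x ≤ C := by
    intro x hx
    have := hsum_anti (Set.left_mem_Icc.mpr hT0) hx hx.1
    simp only [ha0, hb0] at this ⊢
    linarith [this]
  -- exponential weight derivative
  have hexp : ∀ x : ℝ, HasDerivAt (fun t => Real.exp (C * t)) (C * Real.exp (C * x)) x := by
    intro x
    have h1 : HasDerivAt (fun t : ℝ => C * t) C x := by
      simpa using (hasDerivAt_id x).const_mul C
    simpa [mul_comm] using h1.exp
  -- u = a * exp(C t) monotone on [0,T]
  have huA : MonotoneOn (fun t => a t * Real.exp (C * t)) (Set.Icc 0 T) := by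
    apply monotoneOn_of_deriv_nonneg (convex_Icc 0 T)
      (fun x hx => ((hA x hx.1).mul (hexp x)).continuousAt.continuousWithinAt)
    · intro x hx
      rw [interior_Icc] at hx
      exact ((hA x hx.1.le).mul (hexp x)).differentiableAt.differentiableWithinAt
    · intro x hx
      rw [interior_Icc] at hx
      rw [((hA x hx.1.le).mul (hexp x)).deriv]
      obtain ⟨hax, hbx⟩ := hpos x hx.1.le hx.2
      have hCx : a x + b x ≤ C := hsum_le x ⟨hx.1.le, hx.2.le⟩
      have hex : 0 < Real.exp (C * x) := Real.exp_pos _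
      nlinarith [mul_nonneg (mul_nonneg (sub_nonneg.mpr hCx) hax.le) hex.le]
  have huB : MonotoneOn (fun t => b t * Real.exp (C * t)) (Set.Icc 0 T) := by
    apply monotoneOn_of_deriv_nonneg (convex_Icc 0 T)
      (fun x hx => ((hB x hx.1).mul (hexp x)).continuousAt.continuousWithinAt)
    · intro x hx
      rw [interior_Icc] at hx
      exact ((hB x hx.1.le).mul (hexp x)).differentiableAt.differentiableWithinAt
    · intro x hx
      rw [interior_Icc] at hx
      rw [((hB x hx.1.le).mul (hexp x)).deriv]
      obtain ⟨hax, hbx⟩ := hpos x hx.1.le hx.2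
      have hCx : a x + b x ≤ C := hsum_le x ⟨hx.1.le, hx.2.le⟩
      have hex : 0 < Real.exp (C * x) := Real.exp_pos _
      have haC : a x ≤ C := by linarith
      nlinarith [mul_nonneg (mul_nonneg (sub_nonneg.mpr haC) hbx.le) hex.le]
  have haT : 0 < a T := by
    have h1 := huA (Set.left_mem_Icc.mpr hT0) (Set.right_mem_Icc.mpr hT0) hT0
    simp only [ha0, mul_zero, Real.exp_zero, mul_one] at h1
    have hex : 0 < Real.exp (C * T) := Real.exp_pos _
    nlinarith
  have hbT : 0 < b T := by
    have h1 := huB (Set.left_mem_Icc.mpr hT0) (Set.right_mem_Icc.mpr hT0) hT0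
    simp only [hb0, mul_zero, Real.exp_zero, mul_one] at h1
    have hex : 0 < Real.exp (C * T) := Real.exp_pos _
    nlinarith
  have : 0 < min (a T) (b T) := lt_min haT hbT
  linarith
end

section
/- With a' = −(a+b)a, b' = −ab, a(0) = ν₀₁ > 0, b(0) = ν₁₀ > 0, the solution satisfies a(t) → 0 as t → ∞ (the B-groups are asymptotically fully consumed, i.e. μ₀₁(t) → ν₀₁). -/
/-!
Both concentrations stay positive, since each solves a linear equation `f' = -c f` and the zero
function is the only solution through a zero. Then `a' ≤ -a²`, so `(1/a)' ≥ 1`, which gives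
`a t ≤ 1 / t`.
-/

open Set Filter Topology

theorem pos_of_hasDerivAt_neg_mul {f c : ℝ → ℝ}
    (hf : ∀ t ≥ (0 : ℝ), HasDerivAt f (-(c t * f t)) t) (hc : ContinuousOn c (Ici 0))
    (h0 : 0 < f 0) : ∀ t ≥ (0 : ℝ), 0 < f t := by
  by_contra! ⟨T, hT, hfT⟩
  have hfc : ContinuousOn f (Ici 0) := fun t ht => (hf t ht).continuousAt.continuousWithinAt
  obtain ⟨t₀, ht₀, hft₀⟩ : ∃ t₀ ∈ Icc 0 T, f t₀ = 0 :=
    intermediate_value_Icc' hT (hfc.mono Icc_subset_Ici_self) ⟨hfT, h0.le⟩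
  obtain ⟨C, hC⟩ := isCompact_Icc.exists_bound_of_continuousOn
    (hc.mono (Icc_subset_Ici_self : Icc 0 t₀ ⊆ Ici 0))
  have hlip : ∀ t ∈ Ioc 0 t₀, LipschitzOnWith C.toNNReal (fun x => -(c t * x)) univ := by
    intro t ht
    refine (LipschitzWith.of_dist_le_mul fun x y => ?_).lipschitzOnWith
    rw [Real.dist_eq, Real.dist_eq, show -(c t * x) - -(c t * y) = -(c t * (x - y)) by ring,
      abs_neg, abs_mul]
    gcongr
    exact (hC t (Ioc_subset_Icc_self ht)).trans (le_max_left _ _)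
  have hderiv (g : ℝ → ℝ) (hg : ∀ t ≥ (0 : ℝ), HasDerivAt g (-(c t * g t)) t) :
      ∀ t ∈ Ioc 0 t₀, HasDerivWithinAt g (-(c t * g t)) (Iic t) t :=
    fun t ht => (hg t ht.1.le).hasDerivWithinAt
  have hf_zero : EqOn f 0 (Icc 0 t₀) :=
    ODE_solution_unique_of_mem_Icc_left hlip (hfc.mono Icc_subset_Ici_self) (hderiv f hf)
      (fun _ _ => trivial) continuousOn_const
      (hderiv 0 fun t _ => by simp) (fun _ _ => trivial) hft₀
  exact h0.ne' (hf_zero ⟨le_rfl, ht₀.1⟩)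

theorem tendsto_zero_of_hasDerivAt_le_neg_sq {f f' : ℝ → ℝ}
    (hf : ∀ t ≥ (0 : ℝ), HasDerivAt f (f' t) t) (hpos : ∀ t ≥ (0 : ℝ), 0 < f t)
    (hle : ∀ t ≥ (0 : ℝ), f' t ≤ -f t ^ 2) : Tendsto f atTop (𝓝 0) := by
  have hderiv : ∀ t ≥ (0 : ℝ), HasDerivAt (fun t => (f t)⁻¹ - t) (-f' t / f t ^ 2 - 1) t :=
    fun t ht => ((hf t ht).inv (hpos t ht).ne').sub (hasDerivAt_id t)
  have hmono : MonotoneOn (fun t => (f t)⁻¹ - t) (Ici 0) := by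
    refine monotoneOn_of_hasDerivWithinAt_nonneg (f' := fun t => -f' t / f t ^ 2 - 1)
      (convex_Ici 0) (fun t ht => (hderiv t ht).continuousAt.continuousWithinAt)
      (fun t ht => (hderiv t (interior_subset ht)).hasDerivWithinAt) fun t ht => ?_
    replace ht : 0 ≤ t := interior_subset ht
    have hft := hpos t ht
    rw [sub_nonneg, le_div_iff₀ (by positivity)]
    linarith [hle t ht]
  have hbound : ∀ t > (0 : ℝ), f t ≤ t⁻¹ := by
    intro t ht
    have h := hmono self_mem_Ici ht.le ht.le
    have := inv_pos.2 (hpos 0 le_rfl)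
    simp only [sub_zero] at h
    rw [le_inv_comm₀ (hpos t ht.le) ht]
    linarith
  refine tendsto_of_tendsto_of_tendsto_of_le_of_le' tendsto_const_nhds tendsto_inv_atTop_zero ?_ ?_
  · filter_upwards [eventually_ge_atTop 0] with t ht using (hpos t ht).le
  · filter_upwards [eventually_gt_atTop 0] with t ht using hbound t ht

theorem stmt_8 (ν01 ν10 : ℝ) (hν01 : 0 < ν01) (hν10 : 0 < ν10)
    (a b : ℝ → ℝ) (ha0 : a 0 = ν01) (hb0 : b 0 = ν10)
    (ha : ∀ t ≥ (0:ℝ), HasDerivAt a (-((a t + b t) * a t)) t)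
    (hb : ∀ t ≥ (0:ℝ), HasDerivAt b (-(a t * b t)) t) :
    Filter.Tendsto a Filter.atTop (nhds 0) := by
  have ha_cont : ContinuousOn a (Ici 0) := fun t ht => (ha t ht).continuousAt.continuousWithinAt
  have hb_cont : ContinuousOn b (Ici 0) := fun t ht => (hb t ht).continuousAt.continuousWithinAt
  have hb_pos := pos_of_hasDerivAt_neg_mul hb ha_cont (hb0 ▸ hν10)
  have ha_pos := pos_of_hasDerivAt_neg_mul ha (ha_cont.add hb_cont) (ha0 ▸ hν01)
  refine tendsto_zero_of_hasDerivAt_le_neg_sq ha ha_pos fun t ht => ?_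
  nlinarith [ha_pos t ht, hb_pos t ht]
end
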